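/- Let G be a finite simple graph and k ≥ 1. If G admits a quantum k-colouring (on ℂ^d for some d ≥ 1, with projectors of possibly varying ranks), then there exist integers d' ≥ 1 and r ≥ 1 such that G admits a quantum k-colouring on ℂ^{d'} in which every projector has rank exactly r, i.e., a rank-r quantum k-colouring. Consequently, χ_q(G) = min_r χ_q^{(r)}(G). -/

import Mathlib

/-!
If `{E v c}` is a quantum `k`-colouring on `ℂ^d`, then so is the family of cyclic block sums
`F v c = ⊕_{j ∈ ℤ/k} E v (c + j)` on `ℂ^d ⊗ ℂ^k`, and each `F v c` has trace
`∑_c tr (E v c) = tr 1 = d`. The trace of an idempotent matrix is its rank, so every `F v c`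
has rank `d`. Applied to a colouring with `χ_q(G)` colours this gives `χ_q^{(d)}(G) ≤ χ_q(G)`;
conversely `χ_q(G) ≤ χ_q^{(r)}(G)` for every `r ≥ 1`, as a rank-`r` colouring is a quantum
colouring. That comparison needs a rank-`r` colouring to exist at all (`sInf ∅ = 0`): the block
sum of a proper colouring, read as a `0/1` family of `r × r` projectors, is one.
-/

open scoped ComplexConjugate

/-- The standard (conjugate-linear in the first argument) inner product on `ι → ℂ`. -/
noncomputable def cdot {ι : Type} [Fintype ι] (x y : ι → ℂ) : ℂ :=
  ∑ i, conj (x i) * y i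

/-- A `k`-dimensional (complex) orthogonal representation of a graph. -/
def IsOrthRep {V : Type} (G : SimpleGraph V) (k : ℕ) (ψ : V → Fin k → ℂ) : Prop :=
  (∀ v, cdot (ψ v) (ψ v) = 1) ∧ ∀ u v, G.Adj u v → cdot (ψ u) (ψ v) = 0

/-- The orthogonal rank `ξ(G)`: the least `k ≥ 1` admitting a `k`-dimensional
orthogonal representation. -/
noncomputable def orthRank {V : Type} (G : SimpleGraph V) : ℕ :=
  sInf {k | 1 ≤ k ∧ ∃ ψ : V → Fin k → ℂ, IsOrthRep G k ψ}

/-- A quantum `k`-colouring of `G` on `ℂ^d`: projective measurements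
`{E v c}_{c ∈ Fin k}` such that `E u c * E v c = 0` for adjacent `u, v`. -/
def IsQuantumColoring {V : Type} (G : SimpleGraph V) (k d : ℕ)
    (E : V → Fin k → Matrix (Fin d) (Fin d) ℂ) : Prop :=
  (∀ v c, (E v c).IsHermitian) ∧
  (∀ v c, E v c * E v c = E v c) ∧
  (∀ v, ∑ c, E v c = 1) ∧
  ∀ u v, G.Adj u v → ∀ c, E u c * E v c = 0

/-- The quantum chromatic number `χ_q(G)`: the least `k ≥ 1` for which a quantum
`k`-colouring exists on `ℂ^d` for some `d ≥ 1`. -/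
noncomputable def quantumChromaticNumber {V : Type} (G : SimpleGraph V) : ℕ :=
  sInf {k | 1 ≤ k ∧ ∃ d, 1 ≤ d ∧
    ∃ E : V → Fin k → Matrix (Fin d) (Fin d) ℂ, IsQuantumColoring G k d E}

/-- A rank-`r` quantum `k`-colouring: a quantum `k`-colouring on `ℂ^(r*k)` in which
every projector has rank exactly `r`. -/
def IsRankRQuantumColoring {V : Type} (G : SimpleGraph V) (r k : ℕ)
    (E : V → Fin k → Matrix (Fin (r * k)) (Fin (r * k)) ℂ) : Prop :=
  IsQuantumColoring G k (r * k) E ∧ ∀ v c, (E v c).rank = r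

/-- The rank-`r` quantum chromatic number `χ_q^{(r)}(G)`. -/
noncomputable def rankChromaticNumber {V : Type} (G : SimpleGraph V) (r : ℕ) : ℕ :=
  sInf {k | 1 ≤ k ∧ ∃ E : V → Fin k → Matrix (Fin (r * k)) (Fin (r * k)) ℂ,
    IsRankRQuantumColoring G r k E}

/-- The chromatic number of `G` as a natural number: the least `k ≥ 1` for which a
proper `k`-colouring exists. -/
noncomputable def chromNat {V : Type} (G : SimpleGraph V) : ℕ :=
  sInf {k | 1 ≤ k ∧ G.Colorable k}

/-- The clique number `ω(G)`. -/
noncomputable def cliqueNum' {V : Type} (G : SimpleGraph V) : ℕ :=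
  sSup {n | ∃ S : Finset V, G.IsNClique n S}

open Matrix

theorem Matrix.trace_eq_rank_of_isIdempotentElem {K n : Type*} [Field K] [Fintype n]
    [DecidableEq n] {P : Matrix n n K} (hP : IsIdempotentElem P) : P.trace = P.rank := by
  have hproj : LinearMap.IsProj (LinearMap.range P.toLin') P.toLin' :=
    LinearMap.IsIdempotentElem.isProj_range _ (hP.map toLinAlgEquiv')
  rw [← trace_toLin'_eq, hproj.trace, rank]
  rfl

section CyclicBlockDiagonal

variable {α : Type*} {k d : ℕ}

def cyclicBlockDiagonal [Zero α] (P : Fin k → Matrix (Fin d) (Fin d) α) (c : Fin k) :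
    Matrix (Fin (d * k)) (Fin (d * k)) α :=
  reindex finProdFinEquiv finProdFinEquiv (blockDiagonal fun j => P (c + j))

theorem cyclicBlockDiagonal_mul [NonUnitalNonAssocSemiring α]
    (P Q : Fin k → Matrix (Fin d) (Fin d) α) (c : Fin k) :
    cyclicBlockDiagonal P c * cyclicBlockDiagonal Q c = cyclicBlockDiagonal (P * Q) c := by
  simp only [cyclicBlockDiagonal, reindex_apply, submatrix_mul_equiv, ← blockDiagonal_mul,
    Pi.mul_apply]

theorem cyclicBlockDiagonal_zero [Zero α] (c : Fin k) :
    cyclicBlockDiagonal (0 : Fin k → Matrix (Fin d) (Fin d) α) c = 0 := by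
  ext i j
  simp [cyclicBlockDiagonal, blockDiagonal_apply]

theorem sum_cyclicBlockDiagonal [AddCommMonoid α] [NeZero k]
    (P : Fin k → Matrix (Fin d) (Fin d) α) :
    ∑ c, cyclicBlockDiagonal P c =
      reindex finProdFinEquiv finProdFinEquiv (blockDiagonal fun _ => ∑ c, P c) := by
  have hshift : (∑ c : Fin k, fun j => P (c + j)) = fun _ => ∑ c, P c := by
    funext j
    rw [Finset.sum_apply]
    exact Fintype.sum_equiv (Equiv.addRight j) _ _ fun _ => rfl
  rw [← hshift]
  have hbd := map_sum (blockDiagonalAddMonoidHom (Fin d) (Fin d) (Fin k) α)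
    (fun c j => P (c + j)) Finset.univ
  have hre := map_sum (reindexLinearEquiv ℕ α finProdFinEquiv finProdFinEquiv)
    (fun c => blockDiagonal fun j => P (c + j)) Finset.univ
  simp only [blockDiagonalAddMonoidHom_apply, coe_reindexLinearEquiv] at hbd hre
  rw [hbd, hre]
  rfl

theorem isHermitian_cyclicBlockDiagonal [AddMonoid α] [StarAddMonoid α]
    {P : Fin k → Matrix (Fin d) (Fin d) α} (hP : ∀ c, (P c).IsHermitian) (c : Fin k) :
    (cyclicBlockDiagonal P c).IsHermitian := by
  rw [cyclicBlockDiagonal, reindex_apply, isHermitian_submatrix_equiv,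
    isHermitian_blockDiagonal_iff]
  exact fun j => hP (c + j)

theorem trace_cyclicBlockDiagonal [AddCommMonoid α] [NeZero k]
    (P : Fin k → Matrix (Fin d) (Fin d) α) (c : Fin k) :
    (cyclicBlockDiagonal P c).trace = ∑ j, (P j).trace := by
  calc (cyclicBlockDiagonal P c).trace
      = (blockDiagonal fun j => P (c + j)).trace :=
        Fintype.sum_equiv finProdFinEquiv.symm _ _ fun _ => rfl
    _ = ∑ j, (P j).trace := by
        rw [trace_blockDiagonal]
        exact Fintype.sum_equiv (Equiv.addLeft c) _ _ fun _ => rfl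

end CyclicBlockDiagonal

namespace IsQuantumColoring

variable {V : Type} {G : SimpleGraph V} {k d : ℕ} [NeZero k]
  {E : V → Fin k → Matrix (Fin d) (Fin d) ℂ}

theorem cyclicBlockDiagonal (hE : IsQuantumColoring G k d E) :
    IsQuantumColoring G k (d * k) fun v => _root_.cyclicBlockDiagonal (E v) := by
  obtain ⟨hHerm, hIdem, hSum, hOrth⟩ := hE
  refine ⟨fun v c => isHermitian_cyclicBlockDiagonal (hHerm v) c, fun v c => ?_, fun v => ?_,
    fun u v huv c => ?_⟩
  · rw [cyclicBlockDiagonal_mul]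
    exact congrArg (_root_.cyclicBlockDiagonal · c) (funext (hIdem v))
  · simp only [sum_cyclicBlockDiagonal, hSum v]
    rw [← Pi.one_def, blockDiagonal_one, reindex_apply, submatrix_one_equiv]
  · rw [cyclicBlockDiagonal_mul, show E u * E v = 0 from funext (hOrth u v huv),
      cyclicBlockDiagonal_zero]

theorem isRankRQuantumColoring_cyclicBlockDiagonal (hE : IsQuantumColoring G k d E) :
    IsRankRQuantumColoring G d k fun v => _root_.cyclicBlockDiagonal (E v) := by
  refine ⟨hE.cyclicBlockDiagonal, fun v c => ?_⟩
  have htrace : (_root_.cyclicBlockDiagonal (E v) c).trace = d := by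
    rw [trace_cyclicBlockDiagonal, ← trace_sum, hE.2.2.1 v, trace_one, Fintype.card_fin]
  exact_mod_cast (trace_eq_rank_of_isIdempotentElem (hE.cyclicBlockDiagonal.2.1 v c)).symm.trans
    htrace

end IsQuantumColoring

theorem SimpleGraph.Coloring.isQuantumColoring {V : Type} {G : SimpleGraph V} {k : ℕ}
    (C : G.Coloring (Fin k)) (d : ℕ) :
    IsQuantumColoring G k d fun v c => if C v = c then 1 else 0 := by
  refine ⟨fun v c => ?_, fun v c => ?_, fun v => ?_, fun u v huv c => ?_⟩ <;> dsimp only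
  · split_ifs
    exacts [isHermitian_one, isHermitian_zero]
  · split_ifs <;> simp
  · simp
  · have := C.valid huv
    split_ifs <;> simp_all

section ChromaticNumbers

variable {V : Type} [Fintype V] (G : SimpleGraph V)

theorem exists_isRankRQuantumColoring (r : ℕ) :
    ∃ k, 1 ≤ k ∧ ∃ E : V → Fin k → Matrix (Fin (r * k)) (Fin (r * k)) ℂ,
      IsRankRQuantumColoring G r k E := by
  obtain ⟨C⟩ := G.colorable_of_fintype.mono (Fintype.card V).le_succ
  exact ⟨_, Nat.succ_pos _, _, (C.isQuantumColoring r).isRankRQuantumColoring_cyclicBlockDiagonal⟩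

theorem quantumChromaticNumber_le_rankChromaticNumber {r : ℕ} (hr : 1 ≤ r) :
    quantumChromaticNumber G ≤ rankChromaticNumber G r := by
  obtain ⟨hk, E, hE⟩ := Nat.sInf_mem (exists_isRankRQuantumColoring G r)
  exact Nat.sInf_le ⟨hk, _, Nat.mul_pos hr hk, E, hE.1⟩

theorem exists_rankChromaticNumber_eq_quantumChromaticNumber :
    ∃ r, 1 ≤ r ∧ rankChromaticNumber G r = quantumChromaticNumber G := by
  have hne : {k | 1 ≤ k ∧ ∃ d, 1 ≤ d ∧
      ∃ E : V → Fin k → Matrix (Fin d) (Fin d) ℂ, IsQuantumColoring G k d E}.Nonempty := by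
    obtain ⟨k, hk, E, hE⟩ := exists_isRankRQuantumColoring G 1
    exact ⟨k, hk, _, by omega, E, hE.1⟩
  have hmem := Nat.sInf_mem hne
  change quantumChromaticNumber G ∈ _ at hmem
  obtain ⟨hq, d, hd, E, hE⟩ := hmem
  have : NeZero (quantumChromaticNumber G) := NeZero.of_pos hq
  exact ⟨d, hd, le_antisymm (Nat.sInf_le ⟨hq, _, hE.isRankRQuantumColoring_cyclicBlockDiagonal⟩)
    (quantumChromaticNumber_le_rankChromaticNumber G hd)⟩

end ChromaticNumbers

/-- a quantum `k`-colouring (with projectors of possibly varying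
ranks) can be converted into a rank-`r` quantum `k`-colouring for some `r ≥ 1`;
consequently `χ_q(G) = min_r χ_q^{(r)}(G)`. -/
theorem quantum_colouring_to_rank_r {V : Type} [Fintype V]
    (G : SimpleGraph V) (k : ℕ) (hk : 1 ≤ k) :
    ((∃ d, 1 ≤ d ∧ ∃ E : V → Fin k → Matrix (Fin d) (Fin d) ℂ,
        IsQuantumColoring G k d E) →
      ∃ r, 1 ≤ r ∧ ∃ E : V → Fin k → Matrix (Fin (r * k)) (Fin (r * k)) ℂ,
        IsRankRQuantumColoring G r k E) ∧
    quantumChromaticNumber G =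
      sInf {m | ∃ r, 1 ≤ r ∧ m = rankChromaticNumber G r} := by
  have : NeZero k := NeZero.of_pos hk
  refine ⟨?_, ?_⟩
  · rintro ⟨d, hd, E, hE⟩
    exact ⟨d, hd, _, hE.isRankRQuantumColoring_cyclicBlockDiagonal⟩
  obtain ⟨r, hr, hχ⟩ := exists_rankChromaticNumber_eq_quantumChromaticNumber G
  refine Eq.symm <| IsLeast.csInf_eq ⟨⟨r, hr, hχ.symm⟩, ?_⟩
  rintro _ ⟨r', hr', rfl⟩
  exact quantumChromaticNumber_le_rankChromaticNumber G hr'
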